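/- If A ⊆ B and B is a crown of a graph G, then |A| − |N(A)| ≤ |B| − |N(B)|. -/

import Mathlib

open Finset

variable {V : Type*}

namespace CrownPaper

variable [Fintype V] [DecidableEq V]

/-- The (open) neighborhood of a finite set of vertices. -/
def nbrs (G : SimpleGraph V) [DecidableRel G.Adj] (A : Finset V) : Finset V :=
  univ.filter (fun v => ∃ a ∈ A, G.Adj v a)

/-- The closed neighborhood `N[A] = A ∪ N(A)`. -/
def closedNbrs (G : SimpleGraph V) [DecidableRel G.Adj] (A : Finset V) : Finset V :=
  A ∪ nbrs G A

/-- `S` is an independent set of `G`. -/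
def IsIndep (G : SimpleGraph V) (S : Finset V) : Prop :=
  ∀ a ∈ S, ∀ b ∈ S, ¬ G.Adj a b

/-- The difference `d(S) = |S| - |N(S)|`. -/
def diff (G : SimpleGraph V) [DecidableRel G.Adj] (S : Finset V) : ℤ :=
  (S.card : ℤ) - ((nbrs G S).card : ℤ)

/-- `S` is a critical independent set. -/
def IsCritIndep (G : SimpleGraph V) [DecidableRel G.Adj] (S : Finset V) : Prop :=
  IsIndep G S ∧ ∀ I : Finset V, IsIndep G I → diff G I ≤ diff G S

/-- `S` is a crown: an independent set with a matching from `N(S)` into `S`. -/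
def IsCrown (G : SimpleGraph V) [DecidableRel G.Adj] (S : Finset V) : Prop :=
  IsIndep G S ∧ ∃ f : V → V, (∀ v ∈ nbrs G S, f v ∈ S ∧ G.Adj v (f v)) ∧
    Set.InjOn f (nbrs G S : Set V)

/-- `S` is a local maximum independent set: a maximum independent set of `G[N[S]]`. -/
def IsLocalMaxIndep (G : SimpleGraph V) [DecidableRel G.Adj] (S : Finset V) : Prop :=
  IsIndep G S ∧ ∀ I : Finset V, IsIndep G I → I ⊆ closedNbrs G S → I.card ≤ S.card

/-- The independence number. -/
noncomputable def alpha (G : SimpleGraph V) : ℕ :=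
  sSup {n | ∃ S : Finset V, IsIndep G S ∧ S.card = n}

/-- `M` is a matching of `G`, given as a finite set of (ordered) edges. -/
def IsMatching (G : SimpleGraph V) (M : Finset (V × V)) : Prop :=
  (∀ e ∈ M, G.Adj e.1 e.2) ∧
  ∀ e ∈ M, ∀ e' ∈ M, e ≠ e' →
    e.1 ≠ e'.1 ∧ e.1 ≠ e'.2 ∧ e.2 ≠ e'.1 ∧ e.2 ≠ e'.2

/-- The matching number. -/
noncomputable def mu (G : SimpleGraph V) : ℕ :=
  sSup {n | ∃ M : Finset (V × V), IsMatching G M ∧ M.card = n}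

/-- `G` has a perfect matching. -/
def HasPerfectMatching (G : SimpleGraph V) : Prop :=
  ∃ M : Finset (V × V), IsMatching G M ∧ ∀ v : V, ∃ e ∈ M, v = e.1 ∨ v = e.2

/-- `G` is a König–Egerváry graph: `α(G) + μ(G) = |V(G)|`. -/
def IsKonigEgervary (G : SimpleGraph V) : Prop :=
  alpha G + mu G = Fintype.card V

/-- `G` is bipartite. -/
def IsBipartite (G : SimpleGraph V) : Prop :=
  ∃ X : Set V, ∀ a b : V, G.Adj a b → (a ∈ X ↔ b ∉ X)

end CrownPaper

open CrownPaper

namespace CrownPaper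

variable [Fintype V] {G : SimpleGraph V} [DecidableRel G.Adj] {A B : Finset V}

theorem mem_nbrs {v : V} : v ∈ nbrs G A ↔ ∃ a ∈ A, G.Adj v a := by
  simp [nbrs]

theorem nbrs_mono (hAB : A ⊆ B) : nbrs G A ⊆ nbrs G B := fun _ hv =>
  let ⟨a, ha, hadj⟩ := mem_nbrs.mp hv
  mem_nbrs.mpr ⟨a, hAB ha, hadj⟩

/-- A matching `f` of `N(B)` into `B` sends `N(B) \ N(A)` into `B \ A`: if `f v ∈ A`, then
`v ∈ N(A)`. -/
theorem card_nbrs_sdiff_le_card_sdiff [DecidableEq V] {f : V → V}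
    (hf : ∀ v ∈ nbrs G B, f v ∈ B ∧ G.Adj v (f v)) (hinj : Set.InjOn f (nbrs G B : Set V)) :
    #(nbrs G B \ nbrs G A) ≤ #(B \ A) := by
  refine card_le_card_of_injOn f (fun v hv => ?_) (hinj.mono (by simp))
  obtain ⟨hvB, hvA⟩ := mem_sdiff.mp hv
  exact mem_sdiff.mpr ⟨(hf v hvB).1, fun hfA => hvA (mem_nbrs.mpr ⟨f v, hfA, (hf v hvB).2⟩)⟩

end CrownPaper

theorem diff_mono_of_subset_crown (G : SimpleGraph V) [Fintype V] [DecidableEq V]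
    [DecidableRel G.Adj] (A B : Finset V) (hAB : A ⊆ B) (hB : IsCrown G B) :
    diff G A ≤ diff G B := by
  obtain ⟨-, f, hf, hinj⟩ := hB
  have hcard := card_nbrs_sdiff_le_card_sdiff (A := A) hf hinj
  rw [card_sdiff_of_subset (nbrs_mono hAB), card_sdiff_of_subset hAB] at hcard
  have hN := card_le_card (nbrs_mono (G := G) hAB)
  have hS := card_le_card hAB
  unfold diff
  omega
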